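/- arXiv:1803.01057 — 2 statements merged into one kernel-verified Lean document; each statement's English description precedes it below -/
import Mathlib

section
/- Let H be a complex Hilbert space, P0 an orthogonal projection on H, f0 a unit vector with P0 f0 = f0, and let Q0 = P0 − f0⊗f0 (the orthogonal projection onto R(P0) ⊖ ⟨f0⟩). For any anti-Hermitian X ∈ B(H), there exists an anti-Hermitian Y0 ∈ B(H) with Y0 = Q0 Y0 Q0 such that ‖P0 (X + Y0)‖ ≤ ‖P0 (X + Y)‖ for every anti-Hermitian Y ∈ B(H) with Y = Q0 Y Q0. That is, the first-row minimization problem always has a solution. -/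
/-! The objective `Y ↦ ‖P₀ (X + Y)‖` is lower semicontinuous for the weak operator topology,
and the admissible `Y` (anti-Hermitian with `Y = Q₀ Y Q₀`) form a WOT-closed set. Since
`Q₀ P₀ = Q₀`, compressing `P₀ (X + Y)` by `Q₀` gives `Y = Q₀ P₀ (X + Y) Q₀ - Q₀ X Q₀`, so
`‖Y‖ ≤ ‖P₀ (X + Y)‖ + ‖X‖`: only admissible `Y` of norm at most `‖P₀ X‖ + ‖X‖` can do better
than `Y = 0`. Closed balls are WOT-compact (Banach–Alaoglu for the functionals `⟪A x, ·⟫`,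
then Riesz representation), so the minimum over that ball is attained. -/

open scoped InnerProductSpace
open ContinuousLinearMap

/-- The rank-one operator `x ⊗ y`, with `(x ⊗ y) z = ⟨z, y⟩ x` (inner product linear in
the first variable); in Mathlib's convention this is `z ↦ ⟪y, z⟫ • x`. -/
noncomputable def rankOne {H : Type*} [NormedAddCommGroup H] [InnerProductSpace ℂ H]
    (x y : H) : H →L[ℂ] H :=
  (innerSL ℂ y).smulRight x

open scoped Topology
open Filter Set Metric

namespace ContinuousLinearMapWOT

variable {𝕜 E F : Type*} [RCLike 𝕜] [NormedAddCommGroup E] [NormedSpace 𝕜 E]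

section Normed

variable [NormedAddCommGroup F] [NormedSpace 𝕜 F]

theorem isClosed_setOf_norm_le (C : ℝ) : IsClosed {A : E →WOT[𝕜] F | ‖A.toCLM‖ ≤ C} := by
  rcases lt_or_ge C 0 with hC | hC
  · convert isClosed_empty
    exact eq_empty_of_forall_notMem fun A hA => (hC.trans_le (norm_nonneg _)).not_ge hA
  have : {A : E →WOT[𝕜] F | ‖A.toCLM‖ ≤ C} =
      ⋂ (x : E) (f : StrongDual 𝕜 F), {A | ‖f (A x)‖ ≤ C * ‖x‖ * ‖f‖} := by
    ext A
    simp only [mem_ofPred_eq, mem_iInter]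
    refine ⟨fun hA x f => ?_, fun hA => ?_⟩
    · calc ‖f (A x)‖ ≤ ‖f‖ * (‖A.toCLM‖ * ‖x‖) :=
            (f.le_opNorm _).trans (by gcongr; exact A.toCLM.le_opNorm x)
        _ = ‖A.toCLM‖ * ‖x‖ * ‖f‖ := by ring
        _ ≤ C * ‖x‖ * ‖f‖ := by gcongr
    · exact ContinuousLinearMap.opNorm_le_bound _ hC fun x =>
        NormedSpace.norm_le_dual_bound 𝕜 _ (by positivity) fun f => hA x f
  rw [this]
  exact isClosed_iInter fun x => isClosed_iInter fun f =>
    isClosed_le (continuous_dual_apply x f).norm continuous_const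

theorem lowerSemicontinuous_norm_toCLM :
    LowerSemicontinuous fun A : E →WOT[𝕜] F => ‖A.toCLM‖ :=
  lowerSemicontinuous_iff_isClosed_preimage.2 isClosed_setOf_norm_le

end Normed

variable [NormedAddCommGroup F] [InnerProductSpace 𝕜 F]

/-- `x ↦ ⟪A x, ·⟫`, as a conjugate-linear map into the weak dual. -/
noncomputable def toWeakDualₛₗ (A : E →WOT[𝕜] F) : E →ₗ⋆[𝕜] WeakDual 𝕜 F :=
  StrongDual.toWeakDual.toLinearMap ∘ₛₗ (innerSL 𝕜 : F →L⋆[𝕜] StrongDual 𝕜 F).toLinearMap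
    ∘ₛₗ A.toCLM.toLinearMap

theorem exists_le_nhds_of_norm_le [CompleteSpace F] (U : Ultrafilter (E →WOT[𝕜] F)) {C : ℝ}
    (hU : {A : E →WOT[𝕜] F | ‖A.toCLM‖ ≤ C} ∈ U) : ∃ B : E →WOT[𝕜] F, ↑U ≤ 𝓝 B := by
  set T : Set (E → WeakDual 𝕜 F) :=
    univ.pi fun x => WeakDual.toStrongDual ⁻¹' closedBall 0 (C * ‖x‖)
  have hT : IsCompact T := isCompact_univ_pi fun x => WeakDual.isCompact_closedBall 0 _
  obtain ⟨Φ, hΦT, hΦ⟩ := hT.ultrafilter_le_nhds (U.map fun A => ⇑(toWeakDualₛₗ A)) <| by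
    rw [le_principal_iff, Ultrafilter.mem_coe, Ultrafilter.mem_map]
    refine Filter.mem_of_superset hU fun A hA x _ => ?_
    rw [mem_preimage, mem_closedBall, dist_zero_right]
    calc ‖innerSL 𝕜 (A x)‖ = ‖A.toCLM x‖ := innerSL_apply_norm 𝕜 _
      _ ≤ C * ‖x‖ := A.toCLM.le_of_opNorm_le hA x
  set Φₗ : E →ₗ⋆[𝕜] WeakDual 𝕜 F := linearMapOfTendsto Φ _ hΦ
  set B : E →ₗ[𝕜] F := (InnerProductSpace.toDual 𝕜 F).symm.toLinearEquiv.toLinearMap ∘ₛₗ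
    WeakDual.toStrongDual.toLinearMap ∘ₛₗ Φₗ
  have hB : ∀ x, ‖B x‖ ≤ C * ‖x‖ := fun x =>
    ((InnerProductSpace.toDual 𝕜 F).symm.norm_map _).trans_le
      (mem_closedBall_zero_iff.1 (hΦT x (mem_univ x)))
  refine ⟨ofCLM (B.mkContinuous C hB), le_nhds_iff_forall_inner_apply_le_nhds.2 fun x y => ?_⟩
  have hlim : Tendsto (fun A : E →WOT[𝕜] F => ⟪A x, y⟫_𝕜) U (𝓝 ⟪B x, y⟫_𝕜) := by
    rw [show ⟪B x, y⟫_𝕜 = Φ x y from InnerProductSpace.toDual_symm_apply]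
    exact (((WeakDual.eval_continuous y).comp (continuous_apply x)).tendsto Φ).comp hΦ
  have hconj := (RCLike.continuous_conj.tendsto _).comp hlim
  simp only [Function.comp_def, inner_conj_symm] at hconj
  exact hconj

theorem isCompact_setOf_norm_le [CompleteSpace F] (C : ℝ) :
    IsCompact {A : E →WOT[𝕜] F | ‖A.toCLM‖ ≤ C} :=
  isCompact_iff_ultrafilter_le_nhds.2 fun U hU =>
    let ⟨B, hB⟩ := exists_le_nhds_of_norm_le U (le_principal_iff.1 hU)
    ⟨B, (isClosed_setOf_norm_le C).mem_of_tendsto hB (le_principal_iff.1 hU), hB⟩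

end ContinuousLinearMapWOT

theorem norm_le_norm_mul_add_add_norm {R : Type*} [NonUnitalSeminormedRing R] {P Q X Y : R}
    (hQ : ‖Q‖ ≤ 1) (hQP : Q * P = Q) (hY : Y = Q * Y * Q) : ‖Y‖ ≤ ‖P * (X + Y)‖ + ‖X‖ := by
  have hcompress (a : R) : ‖Q * a * Q‖ ≤ ‖a‖ :=
    calc ‖Q * a * Q‖ ≤ ‖Q‖ * ‖a‖ * ‖Q‖ := norm_mul₃_le
      _ ≤ 1 * ‖a‖ * 1 := by gcongr
      _ = ‖a‖ := by ring
  have hYeq : Y = Q * (P * (X + Y)) * Q - Q * X * Q := by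
    rw [← mul_assoc Q P, hQP, mul_add, add_mul, ← hY]
    abel
  calc ‖Y‖ ≤ ‖Q * (P * (X + Y)) * Q‖ + ‖Q * X * Q‖ := by
        conv_lhs => rw [hYeq]
        exact norm_sub_le _ _
    _ ≤ ‖P * (X + Y)‖ + ‖X‖ := add_le_add (hcompress _) (hcompress _)

section Minimization

open ContinuousLinearMapWOT

variable {𝕜 H : Type*} [RCLike 𝕜] [NormedAddCommGroup H] [InnerProductSpace 𝕜 H] [CompleteSpace H]

theorem exists_forall_norm_mul_add_le {P Q : H →L[𝕜] H} (X : H →L[𝕜] H) {S : Set (H →L[𝕜] H)}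
    (hS : IsClosed (toCLM ⁻¹' S : Set (H →WOT[𝕜] H))) (hS0 : 0 ∈ S)
    (hSQ : ∀ Y ∈ S, Y = Q * Y * Q) (hQ : ‖Q‖ ≤ 1) (hQP : Q * P = Q) :
    ∃ Y₀ ∈ S, ∀ Y ∈ S, ‖P * (X + Y₀)‖ ≤ ‖P * (X + Y)‖ := by
  set K := toCLM ⁻¹' S ∩ {A : H →WOT[𝕜] H | ‖A.toCLM‖ ≤ ‖P * X‖ + ‖X‖}
  have hK : IsCompact K := (isCompact_setOf_norm_le _).inter_left hS
  have h0K : (0 : H →WOT[𝕜] H) ∈ K :=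
    ⟨hS0, show ‖(0 : H →L[𝕜] H)‖ ≤ _ by rw [norm_zero]; positivity⟩
  have hf : LowerSemicontinuous fun A : H →WOT[𝕜] H => ‖P * (X + A.toCLM)‖ :=
    lowerSemicontinuous_norm_toCLM.comp (g := fun A => ofCLM P * (ofCLM X + A))
      (continuous_const_mul _ |>.comp (continuous_const.add continuous_id))
  obtain ⟨A₀, ⟨hA₀, -⟩, hmin⟩ :=
    (hf.lowerSemicontinuousOn K).exists_isMinOn ⟨0, h0K⟩ hK
  refine ⟨A₀.toCLM, hA₀, fun Y hY => ?_⟩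
  by_cases hYK : ‖Y‖ ≤ ‖P * X‖ + ‖X‖
  · exact hmin (a := ofCLM Y) ⟨hY, hYK⟩
  calc ‖P * (X + A₀.toCLM)‖ ≤ ‖P * (X + 0)‖ := hmin h0K
    _ ≤ ‖P * (X + Y)‖ := by
      have := norm_le_norm_mul_add_add_norm (X := X) hQ hQP (hSQ Y hY)
      rw [add_zero]
      linarith

theorem isClosed_toCLM_preimage_adjoint_eq_neg_and_eq_mul_mul (Q : H →L[𝕜] H) :
    IsClosed (toCLM ⁻¹' {Y : H →L[𝕜] H | adjoint Y = -Y ∧ Y = Q * Y * Q} :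
      Set (H →WOT[𝕜] H)) := by
  have : toCLM ⁻¹' {Y : H →L[𝕜] H | adjoint Y = -Y ∧ Y = Q * Y * Q} =
      {A | star A = -A} ∩ {A | A = ofCLM Q * A * ofCLM Q} := by
    ext A
    exact and_congr toCLM_injective.eq_iff toCLM_injective.eq_iff
  rw [this]
  exact (isClosed_eq continuous_star continuous_neg).inter
    (isClosed_eq continuous_id (continuous_mul_const _ |>.comp (continuous_const_mul _)))

end Minimization

section RankOne

variable {𝕜 H : Type*} [RCLike 𝕜] [NormedAddCommGroup H] [InnerProductSpace 𝕜 H]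

theorem mul_rankOne_self_of_apply_eq {P : H →L[𝕜] H} {f : H} (hPf : P f = f) :
    P * InnerProductSpace.rankOne 𝕜 f f = InnerProductSpace.rankOne 𝕜 f f := by
  rw [mul_def, InnerProductSpace.comp_rankOne, hPf]

theorem rankOne_self_mul_of_apply_eq [CompleteSpace H] {P : H →L[𝕜] H} (hP : IsSelfAdjoint P)
    {f : H} (hPf : P f = f) :
    InnerProductSpace.rankOne 𝕜 f f * P = InnerProductSpace.rankOne 𝕜 f f := by
  rw [mul_def, InnerProductSpace.rankOne_comp, hP.adjoint_eq, hPf]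

end RankOne

theorem exists_first_row_minimizer_general
    {H : Type*} [NormedAddCommGroup H] [InnerProductSpace ℂ H] [CompleteSpace H]
    (P0 : H →L[ℂ] H) (hP0sa : IsSelfAdjoint P0) (hP0idem : P0 * P0 = P0)
    (f0 : H) (hf0 : ‖f0‖ = 1) (hf0fix : P0 f0 = f0)
    (X : H →L[ℂ] H) :
    ∃ Y0 : H →L[ℂ] H, adjoint Y0 = -Y0 ∧
      Y0 = (P0 - rankOne f0 f0) * Y0 * (P0 - rankOne f0 f0) ∧
      ∀ Y : H →L[ℂ] H, adjoint Y = -Y →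
        Y = (P0 - rankOne f0 f0) * Y * (P0 - rankOne f0 f0) →
        ‖P0 * (X + Y0)‖ ≤ ‖P0 * (X + Y)‖ := by
  set Q := P0 - rankOne f0 f0
  have hQ : IsStarProjection Q :=
    (InnerProductSpace.isStarProjection_rankOne_self hf0).sub_of_mul_eq_right
      ⟨hP0idem, hP0sa⟩ (mul_rankOne_self_of_apply_eq hf0fix)
  have hQP0 : Q * P0 = Q := by
    rw [sub_mul, hP0idem, show rankOne f0 f0 * P0 = rankOne f0 f0 from
      rankOne_self_mul_of_apply_eq hP0sa hf0fix]
  obtain ⟨Y₀, ⟨hY₀adj, hY₀Q⟩, hmin⟩ := exists_forall_norm_mul_add_le X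
    (isClosed_toCLM_preimage_adjoint_eq_neg_and_eq_mul_mul Q) ⟨by simp, by simp⟩
    (fun Y hY => hY.2) hQ.norm_le hQP0
  exact ⟨Y₀, hY₀adj, hY₀Q, fun Y hYadj hYQ => hmin Y ⟨hYadj, hYQ⟩⟩

/-- With `Q0 = P0 − f0⊗f0` (the orthogonal projection onto
`R(P0) ⊖ ⟨f0⟩`), for any anti-Hermitian `X` there is an anti-Hermitian `Y0` with
`Y0 = Q0 Y0 Q0` minimizing the norm of the first block-row: `‖P0(X + Y0)‖ ≤ ‖P0(X + Y)‖`
for every anti-Hermitian `Y` with `Y = Q0 Y Q0`. -/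
theorem exists_first_row_minimizer
    {H : Type*} [NormedAddCommGroup H] [InnerProductSpace ℂ H] [CompleteSpace H]
    (P0 : H →L[ℂ] H) (hP0sa : IsSelfAdjoint P0) (hP0idem : P0 * P0 = P0)
    (f0 : H) (hf0 : ‖f0‖ = 1) (hf0fix : P0 f0 = f0)
    (X : H →L[ℂ] H) (hX : adjoint X = -X) :
    ∃ Y0 : H →L[ℂ] H, adjoint Y0 = -Y0 ∧
      Y0 = (P0 - rankOne f0 f0) * Y0 * (P0 - rankOne f0 f0) ∧
      ∀ Y : H →L[ℂ] H, adjoint Y = -Y →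
        Y = (P0 - rankOne f0 f0) * Y * (P0 - rankOne f0 f0) →
        ‖P0 * (X + Y0)‖ ≤ ‖P0 * (X + Y)‖ :=
  exists_first_row_minimizer_general P0 hP0sa hP0idem f0 hf0 hf0fix X
end

section
/- Let H be a complex Hilbert space, P0 an orthogonal projection, f0 a unit vector with P0 f0 = f0, and P0⊥ = 1 − P0. Define, for X ∈ B₂(H)_{ah}, Q(X) = P0 X P0 + P0⊥ X P0⊥ + (f0⊗f0) X (f0⊗f0) − (f0⊗f0) X P0 − P0 X (f0⊗f0). Then Q is a bounded real-linear map of B₂(H)_{ah} into itself satisfying Q∘Q = Q and ⟨Q(X), Y⟩ = ⟨X, Q(Y)⟩ for the inner product ⟨X,Y⟩ = Re Tr(X Y*), and the range of Q equals the vertical space {Y ∈ B₂(H)_{ah} : Y P0 = P0 Y, Y f0 = 0}; i.e. Q is the orthogonal projection of B₂(H)_{ah} onto the vertical space at (P0,f0). -/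
/-!
Expanding the products, `Q X = E X E + P0⊥ X P0⊥` with `E = P0 - f0 ⊗ f0`: `Q` is the pinching
by the two mutually orthogonal projections `E` and `P0⊥`, whose ranges together are the
orthogonal complement of `f0` in `H`. Idempotence, the description of the range and the fixed
points are then ring identities. Symmetry for `Re Tr (X Y*)` amounts to moving a self-adjoint
factor across the pairing; on the right this uses that the Hilbert–Schmidt norm, hence by
polarization the real pairing, is invariant under `X ↦ X*`.
-/

open scoped InnerProductSpace
open ContinuousLinearMap

/-- `X` is a Hilbert–Schmidt operator, expressed via the Hilbert basis `e`. -/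
def IsHilbertSchmidt {H : Type*} [NormedAddCommGroup H] [InnerProductSpace ℂ H]
    [CompleteSpace H] {ι : Type*} (e : HilbertBasis ι ℂ H) (X : H →L[ℂ] H) : Prop :=
  Summable fun i => ‖X (e i)‖ ^ 2

/-- The Hilbert–Schmidt norm `‖X‖₂`, expressed via the Hilbert basis `e`. -/
noncomputable def hsNorm {H : Type*} [NormedAddCommGroup H] [InnerProductSpace ℂ H]
    [CompleteSpace H] {ι : Type*} (e : HilbertBasis ι ℂ H) (X : H →L[ℂ] H) : ℝ :=
  Real.sqrt (∑' i, ‖X (e i)‖ ^ 2)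

/-- The real trace inner product `Re Tr(X Y*) = ∑ᵢ Re ⟪X eᵢ, Y eᵢ⟫` of Hilbert–Schmidt
operators, expressed via the Hilbert basis `e`. -/
noncomputable def hsReInner {H : Type*} [NormedAddCommGroup H] [InnerProductSpace ℂ H]
    [CompleteSpace H] {ι : Type*} (e : HilbertBasis ι ℂ H) (X Y : H →L[ℂ] H) : ℝ :=
  ∑' i, ((⟪X (e i), Y (e i)⟫_ℂ : ℂ)).re

/-- The map `Q(X) = P0 X P0 + P0⊥ X P0⊥ + (f0⊗f0) X (f0⊗f0) − (f0⊗f0) X P0 − P0 X (f0⊗f0)`. -/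
noncomputable def Qmap {H : Type*} [NormedAddCommGroup H] [InnerProductSpace ℂ H]
    [CompleteSpace H] (P0 : H →L[ℂ] H) (f0 : H) (X : H →L[ℂ] H) : H →L[ℂ] H :=
  P0 * X * P0 + (1 - P0) * X * (1 - P0) + rankOne f0 f0 * X * rankOne f0 f0
    - rankOne f0 f0 * X * P0 - P0 * X * rankOne f0 f0

open scoped ENNReal

namespace HilbertBasis

variable {𝕜 E ι : Type*} [RCLike 𝕜] [NormedAddCommGroup E] [InnerProductSpace 𝕜 E]

theorem hasSum_norm_inner_sq (b : HilbertBasis ι 𝕜 E) (v : E) :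
    HasSum (fun i => ‖⟪b i, v⟫_𝕜‖ ^ 2) (‖v‖ ^ 2) := by
  simpa only [ENNReal.toReal_ofNat, Real.rpow_two, b.repr_apply_apply,
    LinearIsometryEquiv.norm_map] using lp.hasSum_norm (p := 2) (by norm_num) (b.repr v)

theorem tsum_enorm_inner_sq (b : HilbertBasis ι 𝕜 E) (v : E) :
    ∑' i, ‖⟪b i, v⟫_𝕜‖ₑ ^ 2 = ‖v‖ₑ ^ 2 := by
  have h := b.hasSum_norm_inner_sq v
  simp only [← ofReal_norm, ← ENNReal.ofReal_pow (norm_nonneg _)]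
  rw [← ENNReal.ofReal_tsum_of_nonneg (fun _ => by positivity) h.summable, h.tsum_eq]

end HilbertBasis

section HilbertSchmidtNormSq

variable {𝕜 H ι : Type*} [RCLike 𝕜] [NormedAddCommGroup H] [InnerProductSpace 𝕜 H]
  (e : HilbertBasis ι 𝕜 H)

/-- The squared Hilbert–Schmidt norm, valued in `ℝ≥0∞` so that double sums can be swapped
without summability side conditions. -/
noncomputable def hsNormSq (X : H →L[𝕜] H) : ℝ≥0∞ :=
  ∑' i, ‖X (e i)‖ₑ ^ 2

theorem hsNormSq_eq_tsum_tsum (X : H →L[𝕜] H) :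
    hsNormSq e X = ∑' i, ∑' j, ‖⟪e j, X (e i)⟫_𝕜‖ₑ ^ 2 :=
  tsum_congr fun _ => (e.tsum_enorm_inner_sq _).symm

theorem tsum_norm_sq_eq_toReal_hsNormSq (X : H →L[𝕜] H) :
    ∑' i, ‖X (e i)‖ ^ 2 = (hsNormSq e X).toReal := by
  rw [hsNormSq, ENNReal.tsum_toReal_eq (fun _ => by finiteness)]
  simp [ENNReal.toReal_pow]

theorem hsNormSq_mul_left_le (A X : H →L[𝕜] H) :
    hsNormSq e (A * X) ≤ ‖A‖ₑ ^ 2 * hsNormSq e X := by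
  rw [hsNormSq, hsNormSq, ← ENNReal.tsum_mul_left]
  refine ENNReal.tsum_le_tsum fun i => ?_
  rw [← mul_pow]
  gcongr
  exact A.le_opENorm _

theorem hsNormSq_add_le (X Y : H →L[𝕜] H) :
    hsNormSq e (X + Y) ≤ 2 * (hsNormSq e X + hsNormSq e Y) := by
  rw [hsNormSq, hsNormSq, hsNormSq, ← ENNReal.tsum_add, ← ENNReal.tsum_mul_left]
  refine ENNReal.tsum_le_tsum fun i => ?_
  simp only [enorm_eq_nnnorm, add_apply]
  exact_mod_cast (pow_le_pow_left₀ (by positivity) (nnnorm_add_le _ _) 2).trans add_sq_le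

variable [CompleteSpace H]

theorem hsNormSq_adjoint (X : H →L[𝕜] H) : hsNormSq e (adjoint X) = hsNormSq e X := by
  rw [hsNormSq_eq_tsum_tsum, hsNormSq_eq_tsum_tsum, ENNReal.tsum_comm]
  simp only [adjoint_inner_right, ← inner_conj_symm (X (e _)), RCLike.enorm_conj]

theorem hsNormSq_mul_right_le (X B : H →L[𝕜] H) :
    hsNormSq e (X * B) ≤ ‖B‖ₑ ^ 2 * hsNormSq e X := by
  calc hsNormSq e (X * B) = hsNormSq e (adjoint B * adjoint X) := by
        rw [← hsNormSq_adjoint, ← star_eq_adjoint, star_mul, star_eq_adjoint, star_eq_adjoint]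
    _ ≤ ‖adjoint B‖ₑ ^ 2 * hsNormSq e (adjoint X) := hsNormSq_mul_left_le e _ _
    _ = ‖B‖ₑ ^ 2 * hsNormSq e X := by rw [LinearIsometryEquiv.enorm_map, hsNormSq_adjoint]

theorem hsNormSq_mul_mul_le_of_isStarProjection {E : H →L[𝕜] H} (hE : IsStarProjection E)
    (X : H →L[𝕜] H) : hsNormSq e (E * X * E) ≤ hsNormSq e X := by
  have hE1 : ‖E‖ₑ ≤ 1 := by
    simpa [← ofReal_norm] using ENNReal.ofReal_le_one.mpr (hE.norm_le _)
  calc hsNormSq e (E * X * E) ≤ ‖E‖ₑ ^ 2 * (‖E‖ₑ ^ 2 * hsNormSq e X) :=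
        (hsNormSq_mul_right_le e _ E).trans (by gcongr; exact hsNormSq_mul_left_le e E X)
    _ ≤ hsNormSq e X := by
        grw [hE1]; simp

end HilbertSchmidtNormSq

section HilbertSchmidtInner

variable {H ι : Type*} [NormedAddCommGroup H] [InnerProductSpace ℂ H] [CompleteSpace H]
  {e : HilbertBasis ι ℂ H} {X Y : H →L[ℂ] H}

theorem isHilbertSchmidt_iff_hsNormSq_ne_top (X : H →L[ℂ] H) :
    IsHilbertSchmidt e X ↔ hsNormSq e X ≠ ∞ := by
  simp only [IsHilbertSchmidt, hsNormSq, enorm_eq_nnnorm, ← ENNReal.coe_pow,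
    ENNReal.tsum_coe_ne_top_iff_summable, ← NNReal.summable_coe, NNReal.coe_pow, coe_nnnorm]

namespace IsHilbertSchmidt

theorem of_hsNormSq_le {c : ℝ≥0∞} (hc : c ≠ ∞) (hX : IsHilbertSchmidt e X)
    (h : hsNormSq e Y ≤ c * hsNormSq e X) : IsHilbertSchmidt e Y := by
  rw [isHilbertSchmidt_iff_hsNormSq_ne_top] at hX ⊢
  exact ne_top_of_le_ne_top (by finiteness) h

theorem adjoint (hX : IsHilbertSchmidt e X) : IsHilbertSchmidt e (adjoint X) :=
  of_hsNormSq_le ENNReal.one_ne_top hX (by rw [hsNormSq_adjoint, one_mul])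

theorem mul_left (A : H →L[ℂ] H) (hX : IsHilbertSchmidt e X) : IsHilbertSchmidt e (A * X) :=
  of_hsNormSq_le (by finiteness) hX (hsNormSq_mul_left_le e A X)

theorem mul_right (B : H →L[ℂ] H) (hX : IsHilbertSchmidt e X) : IsHilbertSchmidt e (X * B) :=
  of_hsNormSq_le (by finiteness) hX (hsNormSq_mul_right_le e X B)

theorem add (hX : IsHilbertSchmidt e X) (hY : IsHilbertSchmidt e Y) :
    IsHilbertSchmidt e (X + Y) :=
  Summable.of_nonneg_of_le (fun _ => by positivity)
    (fun _ => (pow_le_pow_left₀ (norm_nonneg _) (norm_add_le _ _) 2).trans add_sq_le)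
    ((Summable.add hX hY).mul_left 2)

theorem neg (hX : IsHilbertSchmidt e X) : IsHilbertSchmidt e (-X) := by
  simpa only [IsHilbertSchmidt, neg_apply, norm_neg] using hX

theorem sub (hX : IsHilbertSchmidt e X) (hY : IsHilbertSchmidt e Y) :
    IsHilbertSchmidt e (X - Y) := by
  simpa only [sub_eq_add_neg] using hX.add hY.neg

theorem summable_re_inner (hX : IsHilbertSchmidt e X) (hY : IsHilbertSchmidt e Y) :
    Summable fun i => (⟪X (e i), Y (e i)⟫_ℂ).re := by
  simp only [← RCLike.re_to_complex,
    re_inner_eq_norm_add_mul_self_sub_norm_sub_mul_self_div_four, ← sq, ← add_apply, ← sub_apply]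
  exact (Summable.sub (hX.add hY) (hX.sub hY)).div_const 4

end IsHilbertSchmidt

theorem hsReInner_eq_polarization (hX : IsHilbertSchmidt e X) (hY : IsHilbertSchmidt e Y) :
    hsReInner e X Y = ((hsNormSq e (X + Y)).toReal - (hsNormSq e (X - Y)).toReal) / 4 := by
  rw [← tsum_norm_sq_eq_toReal_hsNormSq, ← tsum_norm_sq_eq_toReal_hsNormSq,
    ← (hX.add hY).tsum_sub (hX.sub hY), ← tsum_div_const, hsReInner]
  simp only [← RCLike.re_to_complex,
    re_inner_eq_norm_add_mul_self_sub_norm_sub_mul_self_div_four, ← sq, ← add_apply, ← sub_apply]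

theorem hsReInner_adjoint (hX : IsHilbertSchmidt e X) (hY : IsHilbertSchmidt e Y) :
    hsReInner e (adjoint X) (adjoint Y) = hsReInner e X Y := by
  rw [hsReInner_eq_polarization hX.adjoint hY.adjoint, hsReInner_eq_polarization hX hY,
    ← map_add, ← map_sub, hsNormSq_adjoint, hsNormSq_adjoint]

theorem hsReInner_mul_left (A X Y : H →L[ℂ] H) :
    hsReInner e (A * X) Y = hsReInner e X (adjoint A * Y) := by
  simp only [hsReInner, mul_apply_eq_comp, adjoint_inner_right]

theorem hsReInner_mul_right (B : H →L[ℂ] H) (hX : IsHilbertSchmidt e X)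
    (hY : IsHilbertSchmidt e Y) :
    hsReInner e (X * B) Y = hsReInner e X (Y * adjoint B) := by
  simp only [← hsReInner_adjoint (hX.mul_right B) hY, ← hsReInner_adjoint hX (hY.mul_right _),
    ← star_eq_adjoint, star_mul, star_star, hsReInner_mul_left]

theorem hsReInner_add_left {X₁ X₂ : H →L[ℂ] H} (hX₁ : IsHilbertSchmidt e X₁)
    (hX₂ : IsHilbertSchmidt e X₂) (hY : IsHilbertSchmidt e Y) :
    hsReInner e (X₁ + X₂) Y = hsReInner e X₁ Y + hsReInner e X₂ Y := by
  rw [hsReInner, hsReInner, hsReInner, ← (hX₁.summable_re_inner hY).tsum_add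
    (hX₂.summable_re_inner hY)]
  simp only [add_apply, inner_add_left, Complex.add_re]

theorem hsReInner_comm (X Y : H →L[ℂ] H) : hsReInner e X Y = hsReInner e Y X := by
  simp only [hsReInner, ← RCLike.re_to_complex, inner_re_symm]

end HilbertSchmidtInner

section Pinching

variable {R : Type*} [Ring R] {E G X : R}

def pinching (E G X : R) : R :=
  E * X * E + G * X * G

theorem pinching_smul_add {S : Type*} [Semiring S] [Module S R] [IsScalarTower S R R]
    [SMulCommClass S R R] (r : S) (X Y : R) :
    pinching E G (r • X + Y) = r • pinching E G X + pinching E G Y := by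
  simp only [pinching, mul_add, add_mul, mul_smul_comm, smul_mul_assoc, smul_add]
  abel

theorem pinching_neg (X : R) : pinching E G (-X) = -pinching E G X := by
  simp only [pinching, mul_neg, neg_mul, neg_add]

theorem pinching_pinching (hE : IsIdempotentElem E) (hG : IsIdempotentElem G) (hEG : E * G = 0)
    (hGE : G * E = 0) (X : R) : pinching E G (pinching E G X) = pinching E G X := by
  simp only [pinching, mul_add, add_mul, ← mul_assoc, hE.eq, hEG]
  simp only [mul_assoc, hE.eq, hG.eq, hGE, hEG, mul_zero, add_zero, zero_add]

theorem star_pinching [StarRing R] (hE : IsSelfAdjoint E) (hG : IsSelfAdjoint G) (X : R) :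
    star (pinching E G X) = pinching E G (star X) := by
  simp only [pinching, star_add, star_mul, hE.star_eq, hG.star_eq, mul_assoc]

end Pinching

section ProjectionPair

variable {R : Type*} [Ring R] {P F X : R}

theorem sub_mul_one_sub_eq_zero (hP : IsIdempotentElem P) (hFP : F * P = F) :
    (P - F) * (1 - P) = 0 := by
  rw [mul_one_sub, sub_mul, hP.eq, hFP, sub_self]

theorem one_sub_mul_sub_eq_zero (hP : IsIdempotentElem P) (hPF : P * F = F) :
    (1 - P) * (P - F) = 0 := by
  rw [one_sub_mul, mul_sub, hP.eq, hPF, sub_sub_sub_cancel_right, sub_self]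

theorem commute_pinching_sub (hP : IsIdempotentElem P) (hPF : P * F = F) (hFP : F * P = F)
    (X : R) : Commute P (pinching (P - F) (1 - P) X) := by
  have hPE : P * (P - F) = P - F := by rw [mul_sub, hP.eq, hPF]
  have hEP : (P - F) * P = P - F := by rw [sub_mul, hP.eq, hFP]
  have hPG : P * (1 - P) = 0 := hP.mul_one_sub_self
  have hGP : (1 - P) * P = 0 := hP.one_sub_mul_self
  simp only [Commute, SemiconjBy, pinching, mul_add, add_mul, ← mul_assoc, hPE, hPG, zero_mul]
  simp only [mul_assoc, hEP, hGP, mul_zero]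

theorem pinching_sub_eq_self (hP : IsIdempotentElem P) (hPX : Commute P X) (hFX : F * X = 0)
    (hXF : X * F = 0) : pinching (P - F) (1 - P) X = X := by
  have hEX : (P - F) * X = P * X := by rw [sub_mul, hFX, sub_zero]
  have hXE : X * (P - F) = P * X := by rw [mul_sub, hXF, sub_zero, hPX.eq]
  have hGXG : (1 - P) * X * (1 - P) = (1 - P) * X := by
    rw [mul_assoc, mul_one_sub, ← hPX.eq, ← one_sub_mul, ← mul_assoc, hP.one_sub.eq]
  rw [pinching, hGXG, hEX, mul_assoc, hXE, ← mul_assoc, hP.eq, ← add_mul, add_sub_cancel,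
    one_mul]

end ProjectionPair

section RankOne

variable {H : Type*} [NormedAddCommGroup H] [InnerProductSpace ℂ H]

theorem rankOne_eq (x y : H) : rankOne x y = InnerProductSpace.rankOne ℂ x y := rfl

theorem mul_rankOne (A : H →L[ℂ] H) (x y : H) : A * rankOne x y = rankOne (A x) y :=
  InnerProductSpace.comp_rankOne x y A

theorem rankOne_mul [CompleteSpace H] (A : H →L[ℂ] H) (x y : H) :
    rankOne x y * A = rankOne x (adjoint A y) :=
  InnerProductSpace.rankOne_comp x y A

theorem rankOne_zero_left (y : H) : rankOne (0 : H) y = 0 := by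
  simp [rankOne_eq]

theorem rankOne_zero_right (x : H) : rankOne x (0 : H) = 0 := by
  simp [rankOne_eq]

theorem rankOne_self_apply_self {f : H} (hf : ‖f‖ = 1) : rankOne f f f = f := by
  simp [rankOne_eq, inner_self_eq_norm_sq_to_K, hf]

end RankOne

section Operators

variable {H ι : Type*} [NormedAddCommGroup H] [InnerProductSpace ℂ H]
  {e : HilbertBasis ι ℂ H} {E G X Y : H →L[ℂ] H}

theorem pinching_apply_eq_zero {v : H} (hE : E v = 0) (hG : G v = 0) : pinching E G X v = 0 := by
  simp [pinching, mul_apply_eq_comp, hE, hG]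

variable [CompleteSpace H]

theorem Qmap_eq_pinching (P X : H →L[ℂ] H) (f : H) :
    Qmap P f X = pinching (P - rankOne f f) (1 - P) X := by
  simp only [Qmap, pinching, mul_sub, sub_mul]
  abel

theorem IsHilbertSchmidt.pinching (hX : IsHilbertSchmidt e X) :
    IsHilbertSchmidt e (pinching E G X) :=
  ((hX.mul_left E).mul_right E).add ((hX.mul_left G).mul_right G)

theorem hsNorm_pinching_le (hE : IsStarProjection E) (hG : IsStarProjection G)
    (hX : IsHilbertSchmidt e X) : hsNorm e (pinching E G X) ≤ 2 * hsNorm e X := by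
  have h4 : hsNormSq e (pinching E G X) ≤ 4 * hsNormSq e X := by
    calc hsNormSq e (pinching E G X) ≤ 2 * (hsNormSq e X + hsNormSq e X) :=
          (hsNormSq_add_le e _ _).trans (by
            gcongr
            exacts [hsNormSq_mul_mul_le_of_isStarProjection e hE X,
              hsNormSq_mul_mul_le_of_isStarProjection e hG X])
      _ = 4 * hsNormSq e X := by ring
  rw [isHilbertSchmidt_iff_hsNormSq_ne_top] at hX
  rw [hsNorm, hsNorm, tsum_norm_sq_eq_toReal_hsNormSq, tsum_norm_sq_eq_toReal_hsNormSq,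
    show (2 : ℝ) = √4 by norm_num, ← Real.sqrt_mul (by norm_num)]
  gcongr
  simpa using ENNReal.toReal_mono (by finiteness) h4

theorem hsReInner_mul_mul (hE : IsSelfAdjoint E) (hG : IsSelfAdjoint G)
    (hX : IsHilbertSchmidt e X) (hY : IsHilbertSchmidt e Y) :
    hsReInner e (E * X * G) Y = hsReInner e X (E * Y * G) := by
  rw [hsReInner_mul_right G (hX.mul_left E) hY, hsReInner_mul_left, hE.adjoint_eq,
    hG.adjoint_eq, mul_assoc]

theorem hsReInner_pinching (hE : IsSelfAdjoint E) (hG : IsSelfAdjoint G)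
    (hX : IsHilbertSchmidt e X) (hY : IsHilbertSchmidt e Y) :
    hsReInner e (pinching E G X) Y = hsReInner e X (pinching E G Y) := by
  have hEX := (hX.mul_left E).mul_right E
  have hGX := (hX.mul_left G).mul_right G
  have hEY := (hY.mul_left E).mul_right E
  have hGY := (hY.mul_left G).mul_right G
  rw [pinching, pinching, hsReInner_add_left hEX hGX hY, hsReInner_comm X,
    hsReInner_add_left hEY hGY hX, hsReInner_mul_mul hE hE hX hY, hsReInner_mul_mul hG hG hX hY,
    hsReInner_comm X, hsReInner_comm X]

end Operators

/-- `Q` is the orthogonal projection of the real Hilbert space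
`B₂(H)_{ah}` (anti-Hermitian Hilbert–Schmidt operators, real trace inner product)
onto the vertical space `{Y : Y P0 = P0 Y, Y f0 = 0}` at `(P0, f0)`: it maps
`B₂(H)_{ah}` into itself, is bounded and real-linear, idempotent, symmetric for the
trace inner product, its range is the vertical space, and it fixes the vertical space. -/
theorem Qmap_orthogonal_projection_onto_vertical
    {H : Type*} [NormedAddCommGroup H] [InnerProductSpace ℂ H] [CompleteSpace H]
    {ι : Type*} (e : HilbertBasis ι ℂ H)
    (P0 : H →L[ℂ] H) (hP0sa : IsSelfAdjoint P0) (hP0idem : P0 * P0 = P0)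
    (f0 : H) (hf0 : ‖f0‖ = 1) (hf0fix : P0 f0 = f0) :
    -- `Q` maps `B₂(H)_{ah}` into itself
    (∀ X : H →L[ℂ] H, IsHilbertSchmidt e X → adjoint X = -X →
      IsHilbertSchmidt e (Qmap P0 f0 X) ∧
        adjoint (Qmap P0 f0 X) = -(Qmap P0 f0 X)) ∧
    -- `Q` is real-linear
    (∀ (r : ℝ) (X Y : H →L[ℂ] H),
      Qmap P0 f0 (r • X + Y) = r • Qmap P0 f0 X + Qmap P0 f0 Y) ∧
    -- `Q` is bounded for the Hilbert–Schmidt norm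
    (∃ C : ℝ, ∀ X : H →L[ℂ] H, IsHilbertSchmidt e X → adjoint X = -X →
      hsNorm e (Qmap P0 f0 X) ≤ C * hsNorm e X) ∧
    -- `Q ∘ Q = Q`
    (∀ X : H →L[ℂ] H, IsHilbertSchmidt e X → adjoint X = -X →
      Qmap P0 f0 (Qmap P0 f0 X) = Qmap P0 f0 X) ∧
    -- `⟨Q X, Y⟩ = ⟨X, Q Y⟩`
    (∀ X Y : H →L[ℂ] H, IsHilbertSchmidt e X → adjoint X = -X →
      IsHilbertSchmidt e Y → adjoint Y = -Y →
      hsReInner e (Qmap P0 f0 X) Y = hsReInner e X (Qmap P0 f0 Y)) ∧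
    -- the range of `Q` lies in the vertical space ...
    (∀ X : H →L[ℂ] H, IsHilbertSchmidt e X → adjoint X = -X →
      Qmap P0 f0 X * P0 = P0 * Qmap P0 f0 X ∧ Qmap P0 f0 X f0 = 0) ∧
    -- ... and `Q` fixes the vertical space (so its range is exactly the vertical space)
    (∀ Y : H →L[ℂ] H, IsHilbertSchmidt e Y → adjoint Y = -Y →
      Y * P0 = P0 * Y → Y f0 = 0 → Qmap P0 f0 Y = Y) := by
  set F := rankOne f0 f0
  have hP : IsStarProjection P0 := ⟨hP0idem, hP0sa⟩
  have hPF : P0 * F = F := by rw [mul_rankOne, hf0fix]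
  have hFP : F * P0 = F := by rw [rankOne_mul, hP0sa.adjoint_eq, hf0fix]
  have hE : IsStarProjection (P0 - F) :=
    (InnerProductSpace.isStarProjection_rankOne_self hf0).sub_of_mul_eq_left hP hFP
  have hG : IsStarProjection (1 - P0) := hP.one_sub
  have hEf0 : (P0 - F) f0 = 0 := by rw [sub_apply, hf0fix, rankOne_self_apply_self hf0, sub_self]
  have hGf0 : (1 - P0) f0 = 0 := by rw [sub_apply, hf0fix, one_apply_eq_self, sub_self]
  simp only [Qmap_eq_pinching]
  refine ⟨fun X hX hXa => ⟨hX.pinching, ?_⟩, pinching_smul_add,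
    ⟨2, fun X hX _ => hsNorm_pinching_le hE hG hX⟩,
    fun X _ _ => pinching_pinching hE.isIdempotentElem hG.isIdempotentElem
      (sub_mul_one_sub_eq_zero hP0idem hFP) (one_sub_mul_sub_eq_zero hP0idem hPF) X,
    fun X Y hX _ hY _ => hsReInner_pinching hE.isSelfAdjoint hG.isSelfAdjoint hX hY,
    fun X _ _ => ⟨(commute_pinching_sub hP0idem hPF hFP X).eq.symm,
      pinching_apply_eq_zero hEf0 hGf0⟩,
    fun Y _ hYa hYP hYf0 => pinching_sub_eq_self hP0idem hYP.symm ?_ ?_⟩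
  · rw [← star_eq_adjoint, star_pinching hE.isSelfAdjoint hG.isSelfAdjoint, star_eq_adjoint, hXa,
      pinching_neg]
  · rw [rankOne_mul, hYa, neg_apply, hYf0, neg_zero, rankOne_zero_right]
  · rw [mul_rankOne, hYf0, rankOne_zero_left]
end
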